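/- arXiv:2306.03817 — 4 statements merged into one kernel-verified Lean document; each statement's English description precedes it below -/
import Mathlib

section
/- Let F : C → D be right-deformable with radiant objects A and radiant replacement (R, s : 𝟭 → R). Let {X_α} be a family of objects of C, and suppose that for each α the morphism F(s_{X_α}) : F(X_α) → F(R X_α) is a weak equivalence in D. Then F sends every weak equivalence between objects of the full subcategory A' generated by A together with the X_α to a weak equivalence; that is, A' is also a valid radiant subcategory for F. -/
open CategoryTheory

/-- Expanding the radiant subcategory: if `F` is right-deformable with radiant objects `A`
and radiant replacement `(R, s)`, and `{X_α}` is a family of objects such that each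
`F(s_{X_α})` is a weak equivalence, then `F` sends weak equivalences between objects of
the enlarged full subcategory `A' = A ∪ {X_α}` to weak equivalences. -/
theorem stmt4 {C : Type*} [Category C] {D : Type*} [Category D]
    (W : MorphismProperty C) (W' : MorphismProperty D)
    [W.HasTwoOutOfThreeProperty] [W'.HasTwoOutOfThreeProperty]
    (F : C ⥤ D) (A : C → Prop)
    (hFA : ∀ {X Y : C} (f : X ⟶ Y), A X → A Y → W f → W' (F.map f))
    (R : C ⥤ C) (hR : ∀ X : C, A (R.obj X))
    (s : 𝟭 C ⟶ R) (hs : ∀ X : C, W (s.app X))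
    {ι : Type*} (Xf : ι → C)
    (hXf : ∀ a : ι, W' (F.map (s.app (Xf a))))
    {Y Z : C} (f : Y ⟶ Z)
    (hY : A Y ∨ ∃ a : ι, Xf a = Y) (hZ : A Z ∨ ∃ a : ι, Xf a = Z)
    (hf : W f) :
    W' (F.map f) := by
  -- R.map f is a weak equivalence by two-out-of-three
  have hnat : s.app Y ≫ R.map f = f ≫ s.app Z := (s.naturality f).symm
  have hRf : W (R.map f) := by
    have := W.of_precomp (s.app Y) (R.map f) (hs Y)
      (by rw [hnat]; exact W.comp_mem _ _ hf (hs Z))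
    exact this
  have hFRf : W' (F.map (R.map f)) := hFA _ (hR Y) (hR Z) hRf
  have hsY : W' (F.map (s.app Y)) := by
    rcases hY with h | ⟨a, rfl⟩
    · exact hFA _ h (hR Y) (hs Y)
    · exact hXf a
  have hsZ : W' (F.map (s.app Z)) := by
    rcases hZ with h | ⟨a, rfl⟩
    · exact hFA _ h (hR Z) (hs Z)
    · exact hXf a
  have hcomp : W' (F.map f ≫ F.map (s.app Z)) := by
    rw [← F.map_comp, ← hnat, F.map_comp]
    exact W'.comp_mem _ _ hsY hFRf
  exact W'.of_postcomp _ _ hsZ hcomp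
end

section
/- Let f : D → E be a map of Hurewicz fibrations over B. With Q = D ×_{E ×_B D} (E ×_B D)^I as above (pullback along evaluation at 0 and the graph of f), the map Q → D given by (d, γ) ↦ pr_D(γ(1)) is a Hurewicz fibration. -/
open unitInterval

/-- A continuous map is a Hurewicz fibration if it has the homotopy lifting property
with respect to all spaces. -/
def IsHurewiczFibration {E B : Type} [TopologicalSpace E] [TopologicalSpace B]
    (p : C(E, B)) : Prop :=
  ∀ (Y : Type) (_ : TopologicalSpace Y) (g : C(Y, E)) (H : C(Y × I, B)),
    (∀ y, H (y, 0) = p (g y)) →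
    ∃ H' : C(Y × I, E), (∀ y, H' (y, 0) = g y) ∧ ∀ z, p (H' z) = H z

/-- The fiber product `E ×_B D` of `pE : E → B` and `pD : D → B`. -/
abbrev FibP {B D E : Type} [TopologicalSpace B] [TopologicalSpace D] [TopologicalSpace E]
    (pD : C(D, B)) (pE : C(E, B)) : Type :=
  {z : E × D // pE z.1 = pD z.2}

/-- The space `Q = D ×_{E ×_B D} (E ×_B D)^I`, the pullback of the path space along
evaluation at `0` and the graph map `d ↦ (f d, d)`. -/
abbrev QSp {B D E : Type} [TopologicalSpace B] [TopologicalSpace D] [TopologicalSpace E]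
    (pD : C(D, B)) (pE : C(E, B)) (f : C(D, E)) : Type :=
  {q : D × C(I, FibP pD pE) // (q.2 0).val = (f q.1, q.1)}

/-- For a map `f : D → E` of Hurewicz fibrations over `B`, the map
`Q → D`, `(d, γ) ↦ pr_D (γ 1)`, is a Hurewicz fibration. -/
theorem stmt10 {B D E : Type} [TopologicalSpace B] [TopologicalSpace D] [TopologicalSpace E]
    (pD : C(D, B)) (pE : C(E, B))
    (hpD : IsHurewiczFibration pD) (hpE : IsHurewiczFibration pE)
    (f : C(D, E)) (hf : ∀ d, pE (f d) = pD d) :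
    ∃ φ : C(QSp pD pE f, D),
      (∀ q : QSp pD pE f, φ q = ((q.val.2 1).val).2) ∧ IsHurewiczFibration φ := by
  classical
  have hφc : Continuous fun q : QSp pD pE f => ((q.val.2 1).val).2 :=
    (continuous_snd.comp continuous_subtype_val).comp
      ((ContinuousEvalConst.continuous_eval_const (1 : I)).comp
        (continuous_snd.comp continuous_subtype_val))
  refine ⟨⟨fun q => ((q.val.2 1).val).2, hφc⟩, fun q => rfl, ?_⟩
  intro Y _ g H h0
  have hγ : Continuous fun y : Y => (g y).val.2 :=
    (continuous_snd.comp continuous_subtype_val).comp g.continuous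
  have hev1 : Continuous fun y : Y => (g y).val.2 1 :=
    (ContinuousEvalConst.continuous_eval_const (1 : I)).comp hγ
  let G : C(Y, E) := ⟨fun y => ((g y).val.2 1).val.1,
    (continuous_fst.comp continuous_subtype_val).comp hev1⟩
  have hK0 : ∀ y, (pD.comp H) (y, 0) = pE (G y) := by
    intro y
    have h1 := ((g y).val.2 1).prop
    have h2 := h0 y
    simp only [ContinuousMap.comp_apply]
    rw [h2]
    exact h1.symm
  obtain ⟨Et, hE0, hEp⟩ := hpE Y _ G (pD.comp H) hK0
  let Htil : C(Y × I, FibP pD pE) :=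
    ⟨fun z => ⟨(Et z, H z), hEp z⟩,
      Continuous.subtype_mk (Et.continuous.prodMk H.continuous) _⟩
  let pj : ℝ → I := Set.projIcc (0:ℝ) 1 zero_le_one
  have hpj : Continuous pj := continuous_projIcc
  have hpjval : ∀ t : I, pj (t : ℝ) = t := fun t => Set.projIcc_val zero_le_one t
  have hpj0 : pj 0 = 0 := hpjval 0
  have hpj1 : pj 1 = 1 := hpjval 1
  let F : (Y × I) × I → FibP pD pE := fun w =>
    if (1 + (w.1.2 : ℝ)) * (w.2 : ℝ) ≤ 1 then
      (g w.1.1).val.2 (pj ((1 + (w.1.2 : ℝ)) * (w.2 : ℝ)))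
    else Htil (w.1.1, pj ((1 + (w.1.2 : ℝ)) * (w.2 : ℝ) - 1))
  have hr : Continuous fun w : (Y × I) × I => (1 + (w.1.2 : ℝ)) * (w.2 : ℝ) := by
    fun_prop
  have hF : Continuous F := by
    apply Continuous.if_le
    · exact ContinuousEval.continuous_eval.comp
        ((hγ.comp (continuous_fst.comp continuous_fst)).prodMk (hpj.comp hr))
    · exact Htil.continuous.comp
        ((continuous_fst.comp continuous_fst).prodMk (hpj.comp (hr.sub continuous_const)))
    · exact hr
    · exact continuous_const
    · intro w hw
      have h1 : pj ((1 + (w.1.2 : ℝ)) * (w.2 : ℝ)) = 1 := by rw [hw]; exact hpj1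
      have h2 : pj ((1 + (w.1.2 : ℝ)) * (w.2 : ℝ) - 1) = 0 := by
        rw [hw, sub_self]; exact hpj0
      rw [h1, h2]
      apply Subtype.ext
      apply Prod.ext
      · exact (hE0 w.1.1).symm
      · exact (h0 w.1.1).symm
  let Fc : C((Y × I) × I, FibP pD pE) := ⟨F, hF⟩
  have hcond : ∀ z : Y × I,
      ((Fc.curry z) 0).val = (f ((g z.1).val.1), (g z.1).val.1) := by
    intro z
    have h00 : F (z, 0) = (g z.1).val.2 0 := by
      simp only [F]
      have hc : (((0:I)) : ℝ) = 0 := rfl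
      rw [hc, mul_zero, if_pos zero_le_one, hpj0]
    show (F (z, 0)).val = _
    rw [h00]
    exact (g z.1).prop
  refine ⟨⟨fun z => ⟨((g z.1).val.1, Fc.curry z), hcond z⟩, ?_⟩, ?_, ?_⟩
  · apply Continuous.subtype_mk
    exact ((continuous_fst.comp continuous_subtype_val).comp
      (g.continuous.comp continuous_fst)).prodMk Fc.curry.continuous
  · intro y
    apply Subtype.ext
    apply Prod.ext
    · rfl
    · show Fc.curry (y, 0) = (g y).val.2
      apply ContinuousMap.ext
      intro s
      show F ((y, 0), s) = (g y).val.2 s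
      simp only [F]
      have hc : (((0:I)) : ℝ) = 0 := rfl
      rw [hc, add_zero, one_mul, if_pos s.2.2, hpjval s]
  · rintro ⟨y, t⟩
    show (F ((y, t), 1)).val.2 = H (y, t)
    simp only [F]
    have hc : (((1:I)) : ℝ) = 1 := rfl
    split_ifs with h
    · have ht0 : t = 0 := by
        apply Subtype.ext
        show (t : ℝ) = 0
        rw [hc, mul_one] at h
        have := t.2.1
        linarith
      have harg : pj ((1 + (t : ℝ)) * (((1:I)) : ℝ)) = 1 := by
        rw [ht0, hc]
        show pj ((1 + (0:ℝ)) * 1) = 1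
        norm_num [hpj1]
      rw [harg, ht0]
      exact (h0 y).symm
    · show H (y, pj ((1 + (t : ℝ)) * (((1:I)) : ℝ) - 1)) = H (y, t)
      have harg : pj ((1 + (t : ℝ)) * (((1:I)) : ℝ) - 1) = t := by
        rw [hc, mul_one, add_sub_cancel_left]
        exact hpjval t
      rw [harg]
end

section
/- Taking H = identity map: for a Hurewicz fibration A → B, the map from the fiberwise path space A ×_{A ×_B A} (A ×_B A)^I to A given by evaluating the path at 1 and projecting to the second coordinate of A ×_B A is both a Hurewicz fibration and a homotopy equivalence. -/
open unitInterval

/-- The fiber product `A ×_B A` of `pA : A → B` with itself. -/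
abbrev SelfFibP {A B : Type} [TopologicalSpace A] [TopologicalSpace B]
    (pA : C(A, B)) : Type :=
  {z : A × A // pA z.1 = pA z.2}

/-- The fiberwise path space `A ×_{A ×_B A} (A ×_B A)^I`, the pullback of
`ev₀ : (A ×_B A)^I → A ×_B A` along the diagonal `Δ : A → A ×_B A`. -/
abbrev SelfQSp {A B : Type} [TopologicalSpace A] [TopologicalSpace B]
    (pA : C(A, B)) : Type :=
  {q : A × C(I, SelfFibP pA) // (q.2 0).val = (q.1, q.1)}

namespace Stmt11Aux

variable {A B : Type} [TopologicalSpace A] [TopologicalSpace B] (pA : C(A, B))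

theorem continuous_mul_I : Continuous fun p : I × I => p.1 * p.2 :=
  Continuous.subtype_mk
    ((continuous_subtype_val.comp continuous_fst).mul
      (continuous_subtype_val.comp continuous_snd)) _

/-- The evaluation-at-one-then-second-projection map. -/
def phi : C(SelfQSp pA, A) :=
  ⟨fun q => ((q.val.2 1).val).2, by
    have h1 : Continuous fun q : SelfQSp pA => q.val.2 :=
      continuous_snd.comp continuous_subtype_val
    exact (continuous_snd.comp continuous_subtype_val).comp
      ((continuous_eval_const (1 : I)).comp h1)⟩

/-- The inclusion `A → SelfQSp` by constant paths. -/
def iota : C(A, SelfQSp pA) :=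
  ⟨fun a => ⟨(a, ContinuousMap.const I ⟨(a, a), rfl⟩), rfl⟩, by
    apply Continuous.subtype_mk
    refine continuous_id.prodMk ?_
    exact ContinuousMap.continuous_const'.comp
      (Continuous.subtype_mk (continuous_id.prodMk continuous_id) _)⟩

/-- Uncurried halfway homotopy: shrinking the path. -/
def E2 : C((I × SelfQSp pA) × I, SelfFibP pA) :=
  ⟨fun p => p.1.2.val.2 (p.1.1 * p.2), by
    have h1 : Continuous fun p : (I × SelfQSp pA) × I => p.1.2.val.2 :=
      continuous_snd.comp (continuous_subtype_val.comp (continuous_snd.comp continuous_fst))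
    have h2 : Continuous fun p : (I × SelfQSp pA) × I => p.1.1 * p.2 :=
      continuous_mul_I.comp ((continuous_fst.comp continuous_fst).prodMk continuous_snd)
    exact h1.eval h2⟩

/-- Homotopy from `ι ∘ pr₁` to `id` on `SelfQSp`. -/
def G2 : ContinuousMap.Homotopy ((iota pA).comp ⟨fun q => q.val.1,
    continuous_fst.comp continuous_subtype_val⟩) (ContinuousMap.id (SelfQSp pA)) where
  toFun := fun p =>
    ⟨(p.2.val.1, (E2 pA).curry p), by
      show ((E2 pA) (p, 0)).val = _
      show (p.2.val.2 (p.1 * 0)).val = _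
      rw [mul_zero, p.2.property]⟩
  continuous_toFun := by
    apply Continuous.subtype_mk
    exact ((continuous_fst.comp continuous_subtype_val).comp continuous_snd).prodMk
      (E2 pA).curry.continuous
  map_zero_left := by
    intro q
    apply Subtype.ext
    refine Prod.ext rfl (ContinuousMap.ext fun s => Subtype.ext ?_)
    show (q.val.2 ((0:I) * s)).val = (q.val.1, q.val.1)
    rw [zero_mul]
    exact q.property
  map_one_left := by
    intro q
    apply Subtype.ext
    refine Prod.ext rfl (ContinuousMap.ext fun s => ?_)
    show (q.val.2 ((1:I) * s)) = q.val.2 s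
    rw [one_mul]

/-- Homotopy from `ι ∘ φ` to `ι ∘ pr₁` on `SelfQSp`. -/
def G1 : ContinuousMap.Homotopy ((iota pA).comp (phi pA))
    ((iota pA).comp ⟨fun q => q.val.1, continuous_fst.comp continuous_subtype_val⟩) where
  toFun := fun p => iota pA ((p.2.val.2 (σ p.1)).val.2)
  continuous_toFun := by
    apply (iota pA).continuous.comp
    apply (continuous_snd.comp continuous_subtype_val).comp
    have h1 : Continuous fun p : I × SelfQSp pA => p.2.val.2 :=
      continuous_snd.comp (continuous_subtype_val.comp continuous_snd)
    exact h1.eval (continuous_symm.comp continuous_fst)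
  map_zero_left := by
    intro q
    show iota pA ((q.val.2 (σ 0)).val.2) = _
    rw [symm_zero]
    rfl
  map_one_left := by
    intro q
    show iota pA ((q.val.2 (σ 1)).val.2) = _
    rw [symm_one]
    show iota pA ((q.val.2 0).val.2) = iota pA q.val.1
    rw [q.property]

end Stmt11Aux

open Stmt11Aux in
/-- For a Hurewicz fibration `A → B`, the map from the fiberwise path space
`A ×_{A ×_B A} (A ×_B A)^I` to `A` given by evaluating the path at `1` and projecting to
the second coordinate is both a Hurewicz fibration and a homotopy equivalence. -/
theorem stmt11 {A B : Type} [TopologicalSpace A] [TopologicalSpace B]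
    (pA : C(A, B)) (hpA : IsHurewiczFibration pA) :
    ∃ φ : C(SelfQSp pA, A),
      (∀ q : SelfQSp pA, φ q = ((q.val.2 1).val).2) ∧
      IsHurewiczFibration φ ∧
      ∃ h : ContinuousMap.HomotopyEquiv (SelfQSp pA) A, h.toFun = φ := by
  classical
  refine ⟨phi pA, fun q => rfl, ?_, ?_⟩
  · -- Hurewicz fibration
    intro Y _ g H hH0
    obtain ⟨L, hL0, hL⟩ := hpA Y _
      ⟨fun y => ((g y).val.2 1).val.1, by
        refine (continuous_fst.comp continuous_subtype_val).comp ?_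
        exact (continuous_eval_const (1 : I)).comp
          ((continuous_snd.comp continuous_subtype_val).comp g.continuous)⟩
      (pA.comp H)
      (by
        intro y
        show pA (H (y, 0)) = pA (((g y).val.2 1).val.1)
        rw [hH0 y]
        exact (((g y).val.2 1).property).symm)
    set r : (Y × I) × I → ℝ := fun p => p.2.val * (1 + p.1.2.val) with hr
    have hrc : Continuous r := (continuous_subtype_val.comp continuous_snd).mul
      (continuous_const.add (continuous_subtype_val.comp (continuous_snd.comp continuous_fst)))
    have key : ∀ p : (Y × I) × I, pA (L (p.1.1, Set.projIcc 0 1 zero_le_one (r p - 1))) =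
        pA (H (p.1.1, Set.projIcc 0 1 zero_le_one (r p - 1))) := fun p => hL _
    set Efun : (Y × I) × I → SelfFibP pA := fun p =>
      if r p ≤ 1 then (g p.1.1).val.2 (Set.projIcc 0 1 zero_le_one (r p))
      else ⟨(L (p.1.1, Set.projIcc 0 1 zero_le_one (r p - 1)),
             H (p.1.1, Set.projIcc 0 1 zero_le_one (r p - 1))), key p⟩ with hE
    have hEc : Continuous Efun := by
      apply Continuous.if_le
      · have h1 : Continuous fun p : (Y × I) × I => (g p.1.1).val.2 :=
          (continuous_snd.comp continuous_subtype_val).comp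
            (g.continuous.comp (continuous_fst.comp continuous_fst))
        exact h1.eval (continuous_projIcc.comp hrc)
      · apply Continuous.subtype_mk
        have hq : Continuous fun p : (Y × I) × I =>
            (p.1.1, Set.projIcc 0 1 zero_le_one (r p - 1)) :=
          (continuous_fst.comp continuous_fst).prodMk
            (continuous_projIcc.comp (hrc.sub continuous_const))
        exact (L.continuous.comp hq).prodMk (H.continuous.comp hq)
      · exact hrc
      · exact continuous_const
      · intro p hp1
        apply Subtype.ext
        have h1 : Set.projIcc 0 1 zero_le_one (r p) = 1 := by
          rw [hp1]; apply Subtype.ext; simp [Set.projIcc]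
        have h2 : Set.projIcc 0 1 zero_le_one (r p - 1) = 0 := by
          rw [hp1]; apply Subtype.ext; simp [Set.projIcc]
        show ((g p.1.1).val.2 (Set.projIcc 0 1 zero_le_one (r p))).val =
          (L (p.1.1, Set.projIcc 0 1 zero_le_one (r p - 1)),
           H (p.1.1, Set.projIcc 0 1 zero_le_one (r p - 1)))
        rw [h1, h2]
        exact Prod.ext (hL0 p.1.1).symm (hH0 p.1.1).symm
    have Eval_le : ∀ p, r p ≤ 1 → Efun p = (g p.1.1).val.2 (Set.projIcc 0 1 zero_le_one (r p)) :=
      fun p h => if_pos h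
    have Eval_gt : ∀ p, ¬ r p ≤ 1 → Efun p =
        ⟨(L (p.1.1, Set.projIcc 0 1 zero_le_one (r p - 1)),
         H (p.1.1, Set.projIcc 0 1 zero_le_one (r p - 1))), key p⟩ :=
      fun p h => if_neg h
    set E : C((Y × I) × I, SelfFibP pA) := ⟨Efun, hEc⟩ with hEdef
    refine ⟨⟨fun z => ⟨(((g z.1).val.1), E.curry z), ?_⟩, ?_⟩, ?_, ?_⟩
    · show (Efun (z, 0)).val = _
      have hr0 : r (z, (0 : I)) = 0 := by simp [hr]
      rw [Eval_le (z, 0) (by rw [hr0]; norm_num)]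
      have h2 : Set.projIcc 0 1 zero_le_one (r (z, (0:I))) = 0 := by
        apply Subtype.ext; rw [hr0]; simp [Set.projIcc]
      rw [h2]
      exact (g z.1).property
    · apply Continuous.subtype_mk
      exact ((continuous_fst.comp continuous_subtype_val).comp
        (g.continuous.comp continuous_fst)).prodMk E.curry.continuous
    · intro y
      apply Subtype.ext
      refine Prod.ext rfl (ContinuousMap.ext fun s => ?_)
      show Efun ((y, 0), s) = (g y).val.2 s
      have hrs : r ((y, (0:I)), s) = s.val := by simp [hr]
      rw [Eval_le ((y, 0), s) (by rw [hrs]; exact s.2.2)]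
      congr 1
      rw [hrs]
      exact Set.projIcc_of_mem zero_le_one s.2
    · rintro ⟨y, t⟩
      show (Efun ((y, t), 1)).val.2 = H (y, t)
      have hrt : r ((y, t), (1:I)) = 1 + t.val := by simp [hr]
      rcases eq_or_lt_of_le t.2.1 with h0 | h0
      · rw [Eval_le ((y, t), 1) (by rw [hrt, ← h0]; norm_num)]
        have h1 : Set.projIcc 0 1 zero_le_one (r ((y, t), (1:I))) = 1 := by
          apply Subtype.ext; rw [hrt, ← h0]; simp [Set.projIcc]
        rw [h1]
        have ht : t = 0 := Subtype.ext h0.symm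
        rw [ht]
        exact (hH0 y).symm
      · rw [Eval_gt ((y, t), 1) (by rw [hrt]; push_neg; linarith)]
        have h1 : Set.projIcc 0 1 zero_le_one (r ((y, t), (1:I)) - 1) = t := by
          rw [hrt, show (1 : ℝ) + t.val - 1 = t.val by ring]
          exact Set.projIcc_of_mem zero_le_one t.2
        show H (y, Set.projIcc 0 1 zero_le_one (r ((y, t), (1:I)) - 1)) = H (y, t)
        rw [h1]
  · -- homotopy equivalence
    refine ⟨⟨phi pA, iota pA, ⟨(G1 pA).trans (G2 pA)⟩, ?_⟩, rfl⟩
    have heq : (phi pA).comp (iota pA) = ContinuousMap.id A := by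
      ext a; rfl
    rw [heq]
end

section
/- In the category of sets, the action of a rigid multi-span is rigid: given sets A₁, …, A_n, C and a span C ←f– E –(g₁,…,g_n)→ A₁ × ⋯ × A_n such that the combined map (f, g₁, …, g_n) : E → C × A₁ × ⋯ × A_n is injective, the functor Set/A₁ × ⋯ × Set/A_n → Set/C sending (X₁,…,X_n) to f_! (g₁,…,g_n)* (X₁ × ⋯ × X_n) (external product over the product of bases, pulled back along (g₁,…,g_n), then postcomposed with f) has no natural automorphism other than the identity. -/
/-! A point of `multiSpanAction A C E f g` at `X` is a pair `(e, x)` with `gᵢ e = Xᵢ.hom xᵢ`; it is the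
image of the base point `(e, ⋆)` under the map induced by `x : T ⟶ X`, where `Tᵢ` is the one-point
object over `gᵢ e`. Over `T` the action is a subsingleton in each fibre over `C`, because `(f, g)` is
injective, so every natural endomorphism fixes the base point and, by naturality, every point. -/

open CategoryTheory

/-- The action of a multi-span `C ←f– E –(gᵢ)→ ∏ Aᵢ` on slice categories of sets:
`(X₁,…,X_n) ↦ f_! (g₁,…,g_n)* (X₁ × ⋯ × X_n)`. -/
def multiSpanAction {ι : Type} (A : ι → Type) (C E : Type)
    (f : E → C) (g : ∀ i, E → A i) :
    (∀ i, Over (A i)) ⥤ Over C where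
  obj X := Over.mk (show {p : E × (∀ i, (X i).left) // ∀ i, g i p.1 = (X i).hom (p.2 i)} ⟶ C
    from TypeCat.ofHom (fun p => f p.val.1))
  map {X Y} η := Over.homMk
    (TypeCat.ofHom (fun p => ⟨(p.val.1, fun i => (η i).left (p.val.2 i)), fun i => by
      have h := congrArg (fun k => k (p.val.2 i)) (Over.w (η i))
      dsimp at h ⊢
      rw [h]
      exact p.property i⟩))
    rfl
  map_id X := by
    apply Over.OverMorphism.ext
    ext p
    rfl
  map_comp {X Y Z} η θ := by
    apply Over.OverMorphism.ext
    ext p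
    rfl

namespace multiSpanAction

variable {ι : Type} {A : ι → Type} {C E : Type} {f : E → C} {g : ∀ i, E → A i}

variable (g) in
def pointObj (e : E) : ∀ i, Over (A i) :=
  fun i => Over.mk (TypeCat.ofHom (fun _ : PUnit.{1} => g i e))

variable (f) in
def basePoint (e : E) : ((multiSpanAction A C E f g).obj (pointObj g e)).left :=
  ⟨(e, fun _ => PUnit.unit), fun _ => rfl⟩

def pointHom {X : ∀ i, Over (A i)} (p : ((multiSpanAction A C E f g).obj X).left) :
    pointObj g p.val.1 ⟶ X :=
  fun i => Over.homMk (TypeCat.ofHom (fun _ => p.val.2 i)) (by ext; exact (p.property i).symm)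

theorem map_pointHom_basePoint {X : ∀ i, Over (A i)} (p : ((multiSpanAction A C E f g).obj X).left) :
    ((multiSpanAction A C E f g).map (pointHom p)).left (basePoint f p.val.1) = p :=
  rfl

theorem eq_basePoint_of_apply_eq
    (hinj : Function.Injective (fun e => (f e, fun i => g i e) : E → C × ∀ i, A i))
    {e : E} (q : ((multiSpanAction A C E f g).obj (pointObj g e)).left) (hq : f q.val.1 = f e) :
    q = basePoint f e := by
  have hqe : q.val.1 = e := hinj (Prod.ext hq (funext q.property))
  exact Subtype.ext (Prod.ext hqe rfl)

theorem natTrans_app_left_apply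
    (hinj : Function.Injective (fun e => (f e, fun i => g i e) : E → C × ∀ i, A i))
    (α : multiSpanAction A C E f g ⟶ multiSpanAction A C E f g)
    (X : ∀ i, Over (A i)) (p : ((multiSpanAction A C E f g).obj X).left) :
    (α.app X).left p = p := by
  have hbase : (α.app _).left (basePoint f p.val.1) = basePoint f p.val.1 :=
    eq_basePoint_of_apply_eq hinj _
      (ConcreteCategory.congr_hom (Over.w (α.app _)) (basePoint f p.val.1))
  have hnat := ConcreteCategory.congr_hom
    (congrArg CommaMorphism.left (α.naturality (pointHom p))) (basePoint f p.val.1)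
  simp only [Over.comp_left, types_comp_apply, map_pointHom_basePoint, hbase] at hnat
  exact hnat

theorem natTrans_eq_id
    (hinj : Function.Injective (fun e => (f e, fun i => g i e) : E → C × ∀ i, A i))
    (α : multiSpanAction A C E f g ⟶ multiSpanAction A C E f g) :
    α = 𝟙 _ := by
  ext X : 2
  apply Over.OverMorphism.ext
  ext p
  exact natTrans_app_left_apply hinj α X p

end multiSpanAction

/-- The action of a rigid multi-span on sets is rigid: if
`(f, g₁, …, g_n) : E → C × ∏ Aᵢ` is injective, then the functor
`Set/A₁ × ⋯ × Set/A_n ⥤ Set/C` above has no natural automorphism other than the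
identity. -/
theorem stmt16 {ι : Type} (A : ι → Type) (C E : Type)
    (f : E → C) (g : ∀ i, E → A i)
    (hinj : Function.Injective (fun e => (f e, fun i => g i e) : E → C × ∀ i, A i))
    (η : multiSpanAction A C E f g ≅ multiSpanAction A C E f g) :
    η = Iso.refl (multiSpanAction A C E f g) :=
  Iso.ext (multiSpanAction.natTrans_eq_id hinj η.hom)
end
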